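/- Let D = (P, B) be a nontrivial 2-(v,k,λ) design, and let G ≤ Aut(D) be a half-flag-transitive automorphism group of D. If gcd(v-1, 2k-2) = 1, then G acts 2-transitively on the point set P. -/
import Mathlib


open Finset

/-- `blocks` is a (simple) nontrivial 2-(v,k,λ) design on the point set `P`,
with replication number `r`. -/
structure IsTwoDesign {P : Type*} [Fintype P] [DecidableEq P]
    (blocks : Finset (Finset P)) (v k lam r : ℕ) : Prop where
  card_points : Fintype.card P = v
  block_size : ∀ B ∈ blocks, B.card = k
  lam_pos : 0 < lam
  pair_count : ∀ x y : P, x ≠ y →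
    (blocks.filter fun B => x ∈ B ∧ y ∈ B).card = lam
  repl_count : ∀ x : P, (blocks.filter fun B => x ∈ B).card = r
  k_gt : 2 < k
  k_lt : k < v - 1

/-- `G` is a group of automorphisms of the design with block set `blocks`:
every element of `G` maps blocks to blocks. -/
def IsAutGroup {P : Type*} [DecidableEq P] (G : Subgroup (Equiv.Perm P))
    (blocks : Finset (Finset P)) : Prop :=
  ∀ g ∈ G, ∀ B ∈ blocks, B.image ⇑g ∈ blocks

/-- `G` is half-flag-transitive on the design with block set `blocks`:
`G` is transitive on blocks, and for every block `B` the setwise stabilizer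
of `B` in `G` has exactly two orbits `O₁`, `O₂` on the points of `B`,
of equal size (hence each of size `k/2`). -/
def HalfFlagTransitive {P : Type*} [DecidableEq P] (G : Subgroup (Equiv.Perm P))
    (blocks : Finset (Finset P)) : Prop :=
  (∀ B₁ ∈ blocks, ∀ B₂ ∈ blocks, ∃ g ∈ G, B₁.image ⇑g = B₂) ∧
  ∀ B ∈ blocks, ∃ O₁ O₂ : Finset P,
    O₁.Nonempty ∧ O₂.Nonempty ∧ Disjoint O₁ O₂ ∧ O₁ ∪ O₂ = B ∧
    O₁.card = O₂.card ∧
    (∀ g ∈ G, B.image ⇑g = B → O₁.image ⇑g = O₁) ∧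
    (∀ g ∈ G, B.image ⇑g = B → O₂.image ⇑g = O₂) ∧
    (∀ x ∈ O₁, ∀ y ∈ O₁, ∃ g ∈ G, B.image ⇑g = B ∧ g x = y) ∧
    (∀ x ∈ O₂, ∀ y ∈ O₂, ∃ g ∈ G, B.image ⇑g = B ∧ g x = y)

/-- `C` is a partition of the point set `P` that is invariant under `G`. -/
def IsInvariantPartition {P : Type*} [Fintype P] [DecidableEq P]
    (G : Subgroup (Equiv.Perm P)) (C : Finset (Finset P)) : Prop :=
  (∀ c ∈ C, c.Nonempty) ∧
  (∀ x : P, ∃! c : Finset P, c ∈ C ∧ x ∈ c) ∧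
  (∀ g ∈ G, ∀ c ∈ C, c.image ⇑g ∈ C)

/-- A partition of `P` is trivial if all classes are singletons, or it is `{P}`. -/
def TrivialPartition {P : Type*} [Fintype P] [DecidableEq P]
    (C : Finset (Finset P)) : Prop :=
  (∀ c ∈ C, c.card = 1) ∨ C = {Finset.univ}

/-- `G` is point-primitive: it is transitive on points and the only
`G`-invariant partitions of the point set are the trivial ones. -/
def PointPrimitive {P : Type*} [Fintype P] [DecidableEq P]
    (G : Subgroup (Equiv.Perm P)) : Prop :=
  (∀ x y : P, ∃ g ∈ G, g x = y) ∧
  ∀ C : Finset (Finset P), IsInvariantPartition G C → TrivialPartition C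


section Aux

variable {P : Type*} [Fintype P] [DecidableEq P]

/-- Double counting pairs (block containing `p`, point of `S` in the block). -/
private lemma sum_inter_card (blocks : Finset (Finset P)) (S : Finset P) (p : P) :
    ∑ B ∈ blocks.filter (fun B => p ∈ B), (S ∩ B).card
      = ∑ w ∈ S, (blocks.filter fun B => p ∈ B ∧ w ∈ B).card := by
  classical
  have key : ∀ B : Finset P, (S ∩ B).card = ∑ w ∈ S, if w ∈ B then 1 else 0 := by
    intro B
    rw [← Finset.filter_mem_eq_inter, Finset.card_filter]
  calc ∑ B ∈ blocks.filter (fun B => p ∈ B), (S ∩ B).card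
      = ∑ B ∈ blocks, if p ∈ B then (S ∩ B).card else 0 := Finset.sum_filter _ _
    _ = ∑ B ∈ blocks, ∑ w ∈ S, (if p ∈ B then 1 else 0) * (if w ∈ B then 1 else 0) := by
        refine Finset.sum_congr rfl fun B _ => ?_
        have hsplit : (if p ∈ B then (S ∩ B).card else 0)
            = (if p ∈ B then 1 else 0) * ∑ w ∈ S, (if w ∈ B then 1 else 0) := by
          split_ifs with h
          · rw [one_mul, key B]
          · rw [zero_mul]
        rw [hsplit, Finset.mul_sum]
    _ = ∑ w ∈ S, ∑ B ∈ blocks, (if p ∈ B then 1 else 0) * (if w ∈ B then 1 else 0) :=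
        Finset.sum_comm
    _ = ∑ w ∈ S, (blocks.filter fun B => p ∈ B ∧ w ∈ B).card := by
        refine Finset.sum_congr rfl fun w _ => ?_
        rw [Finset.card_filter]
        refine Finset.sum_congr rfl fun B _ => ?_
        split_ifs <;> simp_all

private lemma repl_eq {blocks : Finset (Finset P)} {v k lam r : ℕ}
    (hD : IsTwoDesign blocks v k lam r) (p : P) :
    (v - 1) * lam = r * (k - 1) := by
  classical
  have h := sum_inter_card blocks (univ.erase p) p
  have hL : ∑ B ∈ blocks.filter (fun B => p ∈ B), ((univ.erase p) ∩ B).card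
      = r * (k - 1) := by
    have hterm : ∀ B ∈ blocks.filter (fun B => p ∈ B), ((univ.erase p) ∩ B).card = k - 1 := by
      intro B hB
      obtain ⟨hBm, hpB⟩ := Finset.mem_filter.1 hB
      have he : (univ.erase p) ∩ B = B.erase p := by
        ext w
        simp only [Finset.mem_inter, Finset.mem_erase, Finset.mem_univ, and_true, true_and]
      rw [he, Finset.card_erase_of_mem hpB, hD.block_size B hBm]
    rw [Finset.sum_congr rfl hterm, Finset.sum_const, smul_eq_mul, hD.repl_count p]
  have hR : ∑ w ∈ univ.erase p, (blocks.filter fun B => p ∈ B ∧ w ∈ B).card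
      = (v - 1) * lam := by
    have hterm : ∀ w ∈ univ.erase p, (blocks.filter fun B => p ∈ B ∧ w ∈ B).card = lam := by
      intro w hw
      exact hD.pair_count p w (Ne.symm (Finset.ne_of_mem_erase hw))
    rw [Finset.sum_congr rfl hterm, Finset.sum_const, smul_eq_mul,
        Finset.card_erase_of_mem (Finset.mem_univ p), Finset.card_univ, hD.card_points]
  rw [hL, hR] at h
  exact h.symm

private lemma vr_eq_bk {blocks : Finset (Finset P)} {v k lam r : ℕ}
    (hD : IsTwoDesign blocks v k lam r) : v * r = blocks.card * k := by
  classical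
  have h : ∑ p : P, (blocks.filter fun B => p ∈ B).card = ∑ B ∈ blocks, B.card := by
    simp only [Finset.card_filter]
    rw [Finset.sum_comm]
    refine Finset.sum_congr rfl fun B _ => ?_
    rw [Finset.sum_ite_mem, Finset.univ_inter, Finset.sum_const, smul_eq_mul, mul_one]
  calc v * r = ∑ _p : P, r := by
        rw [Finset.sum_const, Finset.card_univ, hD.card_points, smul_eq_mul]
    _ = ∑ p : P, (blocks.filter fun B => p ∈ B).card :=
        Finset.sum_congr rfl fun p _ => (hD.repl_count p).symm
    _ = ∑ B ∈ blocks, B.card := h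
    _ = ∑ _B ∈ blocks, k := Finset.sum_congr rfl fun B hB => hD.block_size B hB
    _ = blocks.card * k := by rw [Finset.sum_const, smul_eq_mul]

private lemma blocks_nonempty {blocks : Finset (Finset P)} {v k lam r : ℕ}
    (hD : IsTwoDesign blocks v k lam r) : blocks.Nonempty := by
  classical
  have hv : 1 < Fintype.card P := by
    rw [hD.card_points]
    have h1 := hD.k_gt
    have h2 := hD.k_lt
    omega
  obtain ⟨a, b, hab⟩ := Fintype.exists_pair_of_one_lt_card hv
  have hc := hD.pair_count a b hab
  have hpos : 0 < (blocks.filter fun B => a ∈ B ∧ b ∈ B).card := by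
    rw [hc]; exact hD.lam_pos
  obtain ⟨B, hB⟩ := Finset.card_pos.1 hpos
  exact ⟨B, (Finset.mem_filter.1 hB).1⟩

private lemma point_trans {blocks : Finset (Finset P)} {v k lam r : ℕ}
    (hD : IsTwoDesign blocks v k lam r)
    (G : Subgroup (Equiv.Perm P))
    (hHFT : HalfFlagTransitive G blocks)
    (p q : P) : ∃ g ∈ G, g p = q := by
  classical
  by_contra hcon
  push_neg at hcon
  obtain ⟨B₀, hB₀m⟩ := blocks_nonempty hD
  set Δ : Finset P := univ.filter (fun z => ∃ g ∈ G, g p = z) with hΔdef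
  have hmem : ∀ u : P, u ∈ Δ ↔ ∃ g ∈ G, g p = u := by
    intro u; simp [hΔdef]
  have hpΔ : p ∈ Δ := (hmem p).2 ⟨1, G.one_mem, by simp⟩
  have hqΔ : q ∉ Δ := by
    intro h
    obtain ⟨g, hg, hgp⟩ := (hmem q).1 h
    exact hcon g hg hgp
  set Δ' : Finset P := univ \ Δ with hΔ'def
  have hqΔ' : q ∈ Δ' := Finset.mem_sdiff.2 ⟨Finset.mem_univ q, hqΔ⟩
  have hinv : ∀ h : Equiv.Perm P, h ∈ G → Δ.image ⇑h = Δ := by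
    intro h hh
    ext u
    simp only [Finset.mem_image, hmem]
    constructor
    · rintro ⟨w, ⟨g, hg, rfl⟩, rfl⟩
      exact ⟨h * g, G.mul_mem hh hg, by simp [Equiv.Perm.mul_apply]⟩
    · rintro ⟨g, hg, rfl⟩
      exact ⟨h⁻¹ (g p), ⟨h⁻¹ * g, G.mul_mem (G.inv_mem hh) hg, by simp⟩, by simp⟩
  have hinv' : ∀ h : Equiv.Perm P, h ∈ G → Δ'.image ⇑h = Δ' := by
    intro h hh
    rw [hΔ'def, Finset.image_sdiff _ _ h.injective, hinv h hh]
    congr 1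
    exact Finset.image_univ_equiv h
  have key : ∀ S : Finset P, (∀ h : Equiv.Perm P, h ∈ G → S.image ⇑h = S) →
      ∀ p₀ ∈ S, r * (S ∩ B₀).card = (S.erase p₀).card * lam + r := by
    intro S hSinv p₀ hp₀
    have hconst : ∀ B ∈ blocks, (S ∩ B).card = (S ∩ B₀).card := by
      intro B hB
      obtain ⟨g, hg, hgB⟩ := hHFT.1 B hB B₀ hB₀m
      conv_rhs => rw [← hgB, ← hSinv g hg,
        ← Finset.image_inter _ _ g.injective,
        Finset.card_image_of_injective _ g.injective]
    have h1 : ∑ B ∈ blocks.filter (fun B => p₀ ∈ B), (S ∩ B).card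
        = r * (S ∩ B₀).card := by
      rw [Finset.sum_congr rfl (fun B hB => hconst B (Finset.mem_filter.1 hB).1),
        Finset.sum_const, smul_eq_mul, hD.repl_count p₀]
    have h2 : ∑ w ∈ S, (blocks.filter fun B => p₀ ∈ B ∧ w ∈ B).card
        = (S.erase p₀).card * lam + r := by
      rw [← Finset.sum_erase_add S _ hp₀]
      congr 1
      · rw [Finset.sum_congr rfl
          (fun w hw => hD.pair_count p₀ w (Ne.symm (Finset.ne_of_mem_erase hw))),
          Finset.sum_const, smul_eq_mul]
      · have hpred : (blocks.filter fun B => p₀ ∈ B ∧ p₀ ∈ B)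
            = blocks.filter fun B => p₀ ∈ B := by
          simp only [and_self]
        rw [hpred, hD.repl_count p₀]
    rw [← h1, sum_inter_card, h2]
  have h₁ := key Δ hinv p hpΔ
  have h₂ := key Δ' hinv' q hqΔ'
  have hck : (Δ ∩ B₀).card + (Δ' ∩ B₀).card = k := by
    have hd : Disjoint (Δ ∩ B₀) (Δ' ∩ B₀) := by
      apply Finset.disjoint_left.2
      intro a ha ha'
      exact (Finset.mem_sdiff.1 (Finset.mem_inter.1 ha').1).2 (Finset.mem_inter.1 ha).1
    have hu : (Δ ∩ B₀) ∪ (Δ' ∩ B₀) = B₀ := by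
      rw [← Finset.union_inter_distrib_right, hΔ'def,
        Finset.union_sdiff_of_subset (Finset.subset_univ Δ), Finset.univ_inter]
    rw [← Finset.card_union_of_disjoint hd, hu, hD.block_size B₀ hB₀m]
  have hΔpos : 1 ≤ Δ.card := Finset.card_pos.2 ⟨p, hpΔ⟩
  have hΔ'pos : 1 ≤ Δ'.card := Finset.card_pos.2 ⟨q, hqΔ'⟩
  have hΔle : Δ.card ≤ v := by
    rw [← hD.card_points, ← Finset.card_univ]
    exact Finset.card_le_card (Finset.subset_univ Δ)
  have hvcards : Δ.card + Δ'.card = v := by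
    rw [hΔ'def, Finset.card_sdiff_of_subset (Finset.subset_univ Δ), Finset.card_univ, hD.card_points]
    omega
  have hrep := repl_eq hD p
  have hkgt := hD.k_gt
  have hklt := hD.k_lt
  have hΔerase : (Δ.erase p).card = Δ.card - 1 := Finset.card_erase_of_mem hpΔ
  have hΔ'erase : (Δ'.erase q).card = Δ'.card - 1 := Finset.card_erase_of_mem hqΔ'
  have E1 : r * k = (v - 1) * lam + r := by
    have h5 : r * ((k - 1) + 1) = r * (k - 1) + r := by ring
    rw [show (k - 1) + 1 = k from by omega] at h5
    rw [h5, ← hrep]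
  have E2 : r * k = (v - 2) * lam + (r + r) := by
    calc r * k = r * ((Δ ∩ B₀).card + (Δ' ∩ B₀).card) := by rw [hck]
      _ = r * (Δ ∩ B₀).card + r * (Δ' ∩ B₀).card := by ring
      _ = ((Δ.erase p).card * lam + r) + ((Δ'.erase q).card * lam + r) := by rw [h₁, h₂]
      _ = ((Δ.erase p).card + (Δ'.erase q).card) * lam + (r + r) := by ring
      _ = (v - 2) * lam + (r + r) := by
          rw [show (Δ.erase p).card + (Δ'.erase q).card = v - 2 by
            rw [hΔerase, hΔ'erase]; omega]
  have E3 : (v - 2) * lam + lam + r = (v - 2) * lam + (r + r) := by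
    have hv2 : v - 1 = (v - 2) + 1 := by omega
    have := E1.symm.trans E2
    rw [hv2, add_mul, one_mul] at this
    exact this
  have E4 : lam = r := by
    rw [add_assoc] at E3
    have := Nat.add_left_cancel E3
    omega
  have E5 : v - 1 = k - 1 := by
    apply Nat.eq_of_mul_eq_mul_right hD.lam_pos
    rw [hrep, E4, mul_comm]
  omega

private lemma stab_trans {blocks : Finset (Finset P)} {v k lam r : ℕ}
    (hD : IsTwoDesign blocks v k lam r)
    (G : Subgroup (Equiv.Perm P))
    (hHFT : HalfFlagTransitive G blocks)
    (hgcd : Nat.gcd (v - 1) (2 * k - 2) = 1)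
    (x y z : P) (hyx : y ≠ x) (hzx : z ≠ x) :
    ∃ g ∈ G, g x = x ∧ g y = z := by
  classical
  have hpt : ∀ p q : P, ∃ g ∈ G, g p = q := point_trans hD G hHFT
  obtain ⟨B₀, hB₀m⟩ := blocks_nonempty hD
  set Δfun : P → Finset P :=
    fun w => univ.filter (fun u => ∃ g ∈ G, g x = w ∧ g y = u) with hΔdef
  have hmem : ∀ w u : P, u ∈ Δfun w ↔ ∃ g ∈ G, g x = w ∧ g y = u := by
    intro w u; simp [hΔdef]
  have hequiv : ∀ (w : P) (h : Equiv.Perm P), h ∈ G → (Δfun w).image ⇑h = Δfun (h w) := by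
    intro w h hh
    ext u
    simp only [Finset.mem_image, hmem]
    constructor
    · rintro ⟨u', ⟨g, hg, hgx, hgy⟩, rfl⟩
      exact ⟨h * g, G.mul_mem hh hg, by simp [Equiv.Perm.mul_apply, hgx, hgy]⟩
    · rintro ⟨g, hg, hgx, hgy⟩
      refine ⟨(h⁻¹ * g) y, ⟨h⁻¹ * g, G.mul_mem (G.inv_mem hh) hg, ?_, rfl⟩, ?_⟩
      · simp [Equiv.Perm.mul_apply, hgx]
      · simp [Equiv.Perm.mul_apply, hgy]
  set d := (Δfun x).card with hd
  have hcard_all : ∀ w : P, (Δfun w).card = d := by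
    intro w
    obtain ⟨g, hg, hgx⟩ := hpt x w
    rw [← hgx, ← hequiv x g hg, Finset.card_image_of_injective _ g.injective]
  have hnotmem : ∀ w : P, w ∉ Δfun w := by
    intro w hw
    obtain ⟨g, hg, h1, h2⟩ := (hmem w w).1 hw
    exact hyx (g.injective (h2.trans h1.symm))
  have hy : y ∈ Δfun x := (hmem x y).2 ⟨1, G.one_mem, by simp⟩
  have hdpos : 0 < d := by rw [hd]; exact Finset.card_pos.2 ⟨y, hy⟩
  have hcount : ∀ w : P,
      ∑ B ∈ blocks.filter (fun B => w ∈ B), ((Δfun w) ∩ B).card = d * lam := by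
    intro w
    have hterm : ∀ u ∈ Δfun w, (blocks.filter fun B => w ∈ B ∧ u ∈ B).card = lam := by
      intro u hu
      refine hD.pair_count w u fun h => hnotmem w (h ▸ hu)
    rw [sum_inter_card, Finset.sum_congr rfl hterm, Finset.sum_const, smul_eq_mul,
      hcard_all w]
  have hswap :
      ∑ w : P, ∑ B ∈ blocks.filter (fun B => w ∈ B), ((Δfun w) ∩ B).card
        = ∑ B ∈ blocks, ∑ w ∈ B, ((Δfun w) ∩ B).card := by
    simp only [Finset.sum_filter]
    rw [Finset.sum_comm]
    refine Finset.sum_congr rfl fun B _ => ?_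
    rw [Finset.sum_ite_mem, Finset.univ_inter]
  have hpsi : ∀ B ∈ blocks, ∑ w ∈ B, ((Δfun w) ∩ B).card
      = ∑ w ∈ B₀, ((Δfun w) ∩ B₀).card := by
    intro B hB
    obtain ⟨g, hg, hgB⟩ := hHFT.1 B₀ hB₀m B hB
    rw [← hgB, Finset.sum_image (fun a _ b _ h => g.injective h)]
    refine Finset.sum_congr rfl fun w hw => ?_
    rw [← hequiv w g hg, ← Finset.image_inter _ _ g.injective,
      Finset.card_image_of_injective _ g.injective]
  have htot : v * (d * lam) = blocks.card * ∑ w ∈ B₀, ((Δfun w) ∩ B₀).card := by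
    calc v * (d * lam) = ∑ _w : P, d * lam := by
          rw [Finset.sum_const, Finset.card_univ, hD.card_points, smul_eq_mul]
      _ = ∑ w : P, ∑ B ∈ blocks.filter (fun B => w ∈ B), ((Δfun w) ∩ B).card :=
          Finset.sum_congr rfl fun w _ => (hcount w).symm
      _ = ∑ B ∈ blocks, ∑ w ∈ B, ((Δfun w) ∩ B).card := hswap
      _ = blocks.card * ∑ w ∈ B₀, ((Δfun w) ∩ B₀).card := by
          rw [Finset.sum_congr rfl hpsi, Finset.sum_const, smul_eq_mul]
  obtain ⟨O₁, O₂, hO₁ne, hO₂ne, hdisj, hunion, hOcard, _, _, htr1, htr2⟩ :=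
    hHFT.2 B₀ hB₀m
  obtain ⟨z₁, hz₁⟩ := hO₁ne
  obtain ⟨z₂, hz₂⟩ := hO₂ne
  have hconst : ∀ (O : Finset P) (z₀ : P), z₀ ∈ O →
      (∀ a ∈ O, ∀ b ∈ O, ∃ g ∈ G, B₀.image ⇑g = B₀ ∧ g a = b) →
      ∑ w ∈ O, ((Δfun w) ∩ B₀).card = O.card * ((Δfun z₀) ∩ B₀).card := by
    intro O z₀ hz₀ htr
    have hterm : ∀ w ∈ O, ((Δfun w) ∩ B₀).card = ((Δfun z₀) ∩ B₀).card := by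
      intro w hw
      obtain ⟨g, hg, hgB, hgz⟩ := htr z₀ hz₀ w hw
      conv_lhs => rw [← hgz, ← hequiv z₀ g hg, ← hgB,
        ← Finset.image_inter _ _ g.injective,
        Finset.card_image_of_injective _ g.injective]
    rw [Finset.sum_congr rfl hterm, Finset.sum_const, smul_eq_mul]
  have hk2m : k = 2 * O₁.card := by
    have h1 : (O₁ ∪ O₂).card = O₁.card + O₂.card := Finset.card_union_of_disjoint hdisj
    rw [hunion, hD.block_size B₀ hB₀m] at h1
    omega
  have hpsiB₀ : ∑ w ∈ B₀, ((Δfun w) ∩ B₀).card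
      = O₁.card * (((Δfun z₁) ∩ B₀).card + ((Δfun z₂) ∩ B₀).card) := by
    have h0 : ∑ w ∈ B₀, ((Δfun w) ∩ B₀).card
        = ∑ w ∈ O₁, ((Δfun w) ∩ B₀).card + ∑ w ∈ O₂, ((Δfun w) ∩ B₀).card := by
      rw [← Finset.sum_union hdisj, hunion]
    rw [h0, hconst O₁ z₁ hz₁ htr1, hconst O₂ z₂ hz₂ htr2, ← hOcard, mul_add]
  set s := ((Δfun z₁) ∩ B₀).card + ((Δfun z₂) ∩ B₀).card with hs
  have hvpos : 0 < v := by
    have := hD.k_gt; have := hD.k_lt; omega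
  have hvrbk := vr_eq_bk hD
  have hrep := repl_eq hD x
  have h1 : v * (2 * d * lam) = v * (r * s) := by
    calc v * (2 * d * lam) = 2 * (v * (d * lam)) := by ring
      _ = 2 * (blocks.card * (O₁.card * s)) := by rw [htot, hpsiB₀]
      _ = (blocks.card * (2 * O₁.card)) * s := by ring
      _ = (blocks.card * k) * s := by rw [← hk2m]
      _ = (v * r) * s := by rw [← hvrbk]
      _ = v * (r * s) := by ring
  have h2 : 2 * d * lam = r * s := Nat.eq_of_mul_eq_mul_left hvpos h1
  have h3 : (2 * (d * (k - 1))) * lam = ((v - 1) * s) * lam := by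
    calc (2 * (d * (k - 1))) * lam = (2 * d * lam) * (k - 1) := by ring
      _ = (r * s) * (k - 1) := by rw [h2]
      _ = (r * (k - 1)) * s := by ring
      _ = ((v - 1) * lam) * s := by rw [← hrep]
      _ = ((v - 1) * s) * lam := by ring
  have h4 : 2 * (d * (k - 1)) = (v - 1) * s :=
    Nat.eq_of_mul_eq_mul_right hD.lam_pos h3
  have hdvd : (v - 1) ∣ d * (2 * k - 2) := by
    refine ⟨s, ?_⟩
    have h2k : 2 * k - 2 = 2 * (k - 1) := by omega
    rw [h2k, ← h4]; ring
  have hdvd' : (v - 1) ∣ d := (Nat.Coprime.dvd_of_dvd_mul_right hgcd) hdvd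
  have hsub : Δfun x ⊆ univ.erase x := by
    intro u hu
    exact Finset.mem_erase.2 ⟨fun h => hnotmem x (h ▸ hu), Finset.mem_univ u⟩
  have hdle : d ≤ v - 1 := by
    calc d ≤ (univ.erase x).card := Finset.card_le_card hsub
      _ = v - 1 := by
          rw [Finset.card_erase_of_mem (Finset.mem_univ x), Finset.card_univ, hD.card_points]
  have hdeq : d = v - 1 := Nat.le_antisymm hdle (Nat.le_of_dvd hdpos hdvd')
  have hfull : Δfun x = univ.erase x := by
    apply Finset.eq_of_subset_of_card_le hsub
    rw [Finset.card_erase_of_mem (Finset.mem_univ x), Finset.card_univ, hD.card_points,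
      ← hd, hdeq]
  have hz : z ∈ Δfun x := by
    rw [hfull]
    exact Finset.mem_erase.2 ⟨hzx, Finset.mem_univ z⟩
  exact (hmem x z).1 hz

end Aux

theorem half_flag_transitive_two_transitive_of_gcd_eq_one
    {P : Type*} [Fintype P] [DecidableEq P]
    (blocks : Finset (Finset P)) (v k lam r : ℕ)
    (hD : IsTwoDesign blocks v k lam r)
    (G : Subgroup (Equiv.Perm P))
    (hAut : IsAutGroup G blocks)
    (hHFT : HalfFlagTransitive G blocks)
    (hgcd : Nat.gcd (v - 1) (2 * k - 2) = 1) :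
    ∀ x y x' y' : P, x ≠ y → x' ≠ y' → ∃ g ∈ G, g x = x' ∧ g y = y' := by
  classical
  intro x y x' y' hxy hxy'
  have hpt : ∀ p q : P, ∃ g ∈ G, g p = q := point_trans hD G hHFT
  obtain ⟨g₁, hg₁, hg₁x⟩ := hpt x x'
  have hne : g₁ y ≠ x' := by
    rw [← hg₁x]
    exact fun h => hxy (g₁.injective h).symm
  obtain ⟨g₂, hg₂, hg₂x, hg₂y⟩ :=
    stab_trans hD G hHFT hgcd x' (g₁ y) y' hne hxy'.symm
  refine ⟨g₂ * g₁, G.mul_mem hg₂ hg₁, ?_, ?_⟩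
  · rw [Equiv.Perm.mul_apply, hg₁x, hg₂x]
  · rw [Equiv.Perm.mul_apply, hg₂y]
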